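/- arXiv:math/0004116 — 2 statements merged into one kernel-verified Lean document; each statement's English description precedes it below -/
import Mathlib

section
/- If k is not of the form −1/2 − n for a nonnegative integer n, then the kernel of the Dunkl operator D on ℂ[x] consists exactly of the constant polynomials. If k = −1/2 − n for some nonnegative integer n, then the kernel of D on ℂ[x] is the two-dimensional space spanned by 1 and x^{2n+1}. -/
open Polynomial

/-- The Dunkl operator on polynomials: D(p) = p' + k·(p(x) - p(-x))/x. -/
noncomputable def dunklP (k : ℂ) (p : Polynomial ℂ) : Polynomial ℂ :=
  derivative p + C k * divX (p - p.comp (-X))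

set_option maxRecDepth 8000


lemma coeff_comp_negX (p : ℂ[X]) (m : ℕ) : (p.comp (-X)).coeff m = (-1)^m * p.coeff m := by
  induction p using Polynomial.induction_on' with
  | add p q hp hq => simp [add_comp, hp, hq, mul_add]
  | monomial n a =>
    have hX : (-X : ℂ[X]) = C (-1) * X := by simp
    rw [monomial_comp, hX, mul_pow, ← C_pow, ← mul_assoc, ← C_mul]
    simp only [coeff_C_mul, coeff_monomial, coeff_X_pow]
    rcases eq_or_ne n m with rfl | h
    · simp; ring
    · simp [h, Ne.symm h]

lemma dunkl_coeff (k : ℂ) (p : ℂ[X]) (m : ℕ) :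
    (dunklP k p).coeff m = ((m+1 : ℂ) + k*(1 - (-1)^(m+1))) * p.coeff (m+1) := by
  simp [dunklP, coeff_derivative, coeff_divX, coeff_comp_negX]
  ring

lemma kernel_iff (k : ℂ) (p : ℂ[X]) :
    dunklP k p = 0 ↔ ∀ m : ℕ, ((m+1:ℂ) + k*(1-(-1)^(m+1))) * p.coeff (m+1) = 0 := by
  rw [Polynomial.ext_iff]
  simp [dunkl_coeff]


theorem stmt9 (k : ℂ) :
    ((∀ n : ℕ, k ≠ -(1/2) - (n : ℂ)) →
        ∀ p : Polynomial ℂ, dunklP k p = 0 ↔ ∃ c : ℂ, p = C c) ∧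
      (∀ n : ℕ, k = -(1/2) - (n : ℂ) →
        ∀ p : Polynomial ℂ,
          dunklP k p = 0 ↔ ∃ a b : ℂ, p = C a + C b * X ^ (2 * n + 1)) := by
  constructor
  · intro hk p
    rw [kernel_iff]
    constructor
    · intro h
      refine ⟨p.coeff 0, ?_⟩
      ext j
      rcases j with _ | m
      · simp
      · rw [coeff_C, if_neg (Nat.succ_ne_zero m)]
        have hfac : ((m+1:ℂ) + k*(1-(-1)^(m+1))) ≠ 0 := by
          rcases Nat.even_or_odd (m+1) with he | ho
          · simpa [he.neg_one_pow] using (Nat.cast_add_one_ne_zero m : ((m:ℂ)+1) ≠ 0)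
          · rw [ho.neg_one_pow]
            intro hzero
            obtain ⟨a, ha⟩ := ho
            apply hk a
            have hm2 : m = 2*a := by omega
            subst hm2
            push_cast at hzero ⊢
            linear_combination hzero / 2
        exact (mul_eq_zero.mp (h m)).resolve_left hfac
    · rintro ⟨c, rfl⟩ m
      simp [coeff_C]
  · intro n hk p
    rw [kernel_iff]
    constructor
    · intro h
      refine ⟨p.coeff 0, p.coeff (2*n+1), ?_⟩
      ext j
      rcases j with _ | m
      · simp
      · rw [coeff_add, coeff_C, if_neg (Nat.succ_ne_zero m), coeff_C_mul, coeff_X_pow,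
          zero_add]
        rcases eq_or_ne (m+1) (2*n+1) with he | hne
        · rw [if_pos he, he, mul_one]
        · rw [if_neg hne, mul_zero]
          have hfac : ((m+1:ℂ) + k*(1-(-1)^(m+1))) ≠ 0 := by
            rcases Nat.even_or_odd (m+1) with he | ho
            · simpa [he.neg_one_pow] using (Nat.cast_add_one_ne_zero m : ((m:ℂ)+1) ≠ 0)
            · rw [ho.neg_one_pow]
              obtain ⟨a, ha⟩ := ho
              have hm2 : m = 2*a := by omega
              have han : a ≠ n := by omega
              subst hm2 hk
              have : (a:ℂ) ≠ (n:ℂ) := by exact_mod_cast han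
              intro hzero
              apply this
              push_cast at hzero
              linear_combination hzero / 2
          exact (mul_eq_zero.mp (h m)).resolve_left hfac
    · rintro ⟨a, b, rfl⟩ m
      rw [coeff_add, coeff_C, if_neg (Nat.succ_ne_zero m), coeff_C_mul, coeff_X_pow,
        zero_add]
      rcases eq_or_ne (m+1) (2*n+1) with he | hne
      · rw [if_pos he, mul_one]
        have hodd : Odd (m+1) := by rw [he]; exact ⟨n, by ring⟩
        rw [hodd.neg_one_pow]
        have : (m:ℂ) = 2*n := by exact_mod_cast (by omega : m = 2*n)
        subst hk
        rw [this]
        ring_nf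
      · rw [if_neg hne, mul_zero, mul_zero]
end

section
/- For k = −1/2 − n with n a nonnegative integer, the only nontrivial proper subspace of ℂ[x] invariant under multiplication by x, the reflection s, and the Dunkl operator D is the ideal (x^{2n+1}). -/
open Polynomial

namespace Stmt12Aux

/-- Eigenvalue of p ↦ D(X·p) on x^j. -/
noncomputable def cE (k : ℂ) (j : ℕ) : ℂ := (j : ℂ) + 1 + k * (1 - (-1) ^ (j + 1))

lemma coeff_comp_neg_X (p : Polynomial ℂ) (j : ℕ) :
    (p.comp (-X)).coeff j = (-1) ^ j * p.coeff j := by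
  induction p using Polynomial.induction_on' with
  | add p q hp hq => simp [add_comp, hp, hq, mul_add]
  | monomial i a =>
    rw [monomial_comp, show (-X : Polynomial ℂ) = C (-1) * X by simp, mul_pow, ← C_pow,
      ← mul_assoc, ← C_mul, coeff_C_mul, coeff_X_pow, coeff_monomial]
    rcases eq_or_ne i j with rfl | h
    · simp [mul_comm]
    · simp [h, Ne.symm h]

lemma coeff_dunklP (k : ℂ) (p : Polynomial ℂ) (j : ℕ) :
    (dunklP k p).coeff j = cE k j * p.coeff (j + 1) := by
  unfold dunklP cE
  rw [coeff_add, coeff_derivative, coeff_C_mul, coeff_divX, coeff_sub, coeff_comp_neg_X]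
  ring

lemma coeff_T (k : ℂ) (p : Polynomial ℂ) (j : ℕ) :
    (dunklP k (X * p)).coeff j = cE k j * p.coeff j := by
  rw [coeff_dunklP, coeff_X_mul]

lemma cE_sub (k : ℂ) {i j : ℕ} (h : i % 2 = j % 2) : cE k i - cE k j = (i : ℂ) - j := by
  have : (-1 : ℂ) ^ (i + 1) = (-1) ^ (j + 1) := by
    rcases Nat.even_or_odd i with hi | hi
    · have hj : Even j := by rw [Nat.even_iff] at *; omega
      have hi' : Odd (i + 1) := Even.add_one hi
      have hj' : Odd (j + 1) := Even.add_one hj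
      rw [hi'.neg_one_pow, hj'.neg_one_pow]
    · have hj : Odd j := by rw [Nat.odd_iff] at *; omega
      have hi' : Even (i + 1) := Odd.add_one hi
      have hj' : Even (j + 1) := Odd.add_one hj
      rw [hi'.neg_one_pow, hj'.neg_one_pow]
  unfold cE
  rw [this]; ring

lemma cE_inj (k : ℂ) {i j : ℕ} (h : i % 2 = j % 2) (hne : i ≠ j) : cE k i ≠ cE k j := by
  intro he
  have := cE_sub k h
  rw [he, sub_self] at this
  have : (i : ℂ) = j := by linear_combination -this
  exact hne (Nat.cast_injective this)

lemma cE_ne_zero (n : ℕ) (k : ℂ) (hk : k = -(1/2) - (n : ℂ)) {j : ℕ} (h : j ≠ 2 * n) :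
    cE k j ≠ 0 := by
  unfold cE
  rcases Nat.even_or_odd j with hj | hj
  · have : (-1 : ℂ) ^ (j + 1) = -1 := (Even.add_one hj).neg_one_pow
    rw [this, hk]
    intro h0
    have : (j : ℂ) = 2 * n := by linear_combination h0
    apply h
    have : ((j : ℕ) : ℂ) = ((2 * n : ℕ) : ℂ) := by push_cast; linear_combination this
    exact Nat.cast_injective this
  · have : (-1 : ℂ) ^ (j + 1) = 1 := (Odd.add_one hj).neg_one_pow
    rw [this]
    intro h0
    have hj0 : (j : ℂ) + 1 ≠ 0 := Nat.cast_add_one_ne_zero j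
    apply hj0
    linear_combination h0

lemma dunklP_X_pow (k : ℂ) (m : ℕ) :
    dunklP k (X ^ (m + 1)) = cE k m • (X : Polynomial ℂ) ^ m := by
  ext j
  rw [pow_succ', coeff_T, coeff_smul, coeff_X_pow]
  rcases eq_or_ne m j with rfl | h
  · simp
  · simp [h, Ne.symm h]

section V

variable (n : ℕ) (k : ℂ) (V : Submodule ℂ (Polynomial ℂ))
variable (hx : ∀ p ∈ V, X * p ∈ V) (hD : ∀ p ∈ V, dunklP k p ∈ V)

include hx hD in
lemma extract : ∀ N (q : Polynomial ℂ), q.support.card ≤ N → q ∈ V →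
    (∀ i ∈ q.support, ∀ j ∈ q.support, i % 2 = j % 2) →
    ∀ m ∈ q.support, q.coeff m • (X : Polynomial ℂ) ^ m ∈ V := by
  intro N
  induction N with
  | zero =>
    intro q hcard _ _ m hm
    rw [Nat.le_zero, Finset.card_eq_zero] at hcard
    rw [hcard] at hm
    exact absurd hm (Finset.notMem_empty m)
  | succ N ih =>
    intro q hcard hq hpar m hm
    by_cases hsub : q.support ⊆ {m}
    · have : q = q.coeff m • (X : Polynomial ℂ) ^ m := by
        ext j
        rw [coeff_smul, coeff_X_pow]
        rcases eq_or_ne j m with rfl | h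
        · simp
        · have : j ∉ q.support := fun hj => h (Finset.mem_singleton.mp (hsub hj))
          simp [h, Polynomial.notMem_support_iff.mp this]
      rw [← this]; exact hq
    · obtain ⟨m', hm', hm'm⟩ : ∃ m' ∈ q.support, m' ≠ m := by
        by_contra hc
        push_neg at hc
        exact hsub fun j hj => Finset.mem_singleton.mpr (hc j hj)
      set q' : Polynomial ℂ := dunklP k (X * q) - cE k m' • q with hq'def
      have hq'V : q' ∈ V := Submodule.sub_mem V (hD _ (hx _ hq)) (Submodule.smul_mem V _ hq)
      have hco : ∀ j, q'.coeff j = (cE k j - cE k m') * q.coeff j := by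
        intro j
        rw [hq'def, coeff_sub, coeff_T, coeff_smul, smul_eq_mul]
        ring
      have hsupp : q'.support ⊆ q.support.erase m' := by
        intro j hj
        rw [Polynomial.mem_support_iff, hco] at hj
        rcases eq_or_ne j m' with rfl | h
        · exact absurd (by rw [sub_self, zero_mul]) hj
        · exact Finset.mem_erase.mpr ⟨h, Polynomial.mem_support_iff.mpr
            fun h0 => hj (by rw [h0, mul_zero])⟩
      have hcard' : q'.support.card ≤ N := by
        have h1 := Finset.card_le_card hsupp
        have h2 : (q.support.erase m').card = q.support.card - 1 :=
          Finset.card_erase_of_mem hm'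
        omega
      have hcm : cE k m ≠ cE k m' := cE_inj k (hpar m hm m' hm') (Ne.symm hm'm)
      have hmq' : m ∈ q'.support := by
        rw [Polynomial.mem_support_iff, hco]
        exact mul_ne_zero (sub_ne_zero.mpr hcm) (Polynomial.mem_support_iff.mp hm)
      have hpar' : ∀ i ∈ q'.support, ∀ j ∈ q'.support, i % 2 = j % 2 := fun i hi j hj =>
        hpar i (Finset.mem_of_mem_erase (hsupp hi)) j (Finset.mem_of_mem_erase (hsupp hj))
      have := ih q' hcard' hq'V hpar' m hmq'
      rw [hco] at this
      have h2 := Submodule.smul_mem V (cE k m - cE k m')⁻¹ this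
      rwa [smul_smul, ← mul_assoc, inv_mul_cancel₀ (sub_ne_zero.mpr hcm), one_mul] at h2

variable (hs : ∀ p ∈ V, p.comp (-X) ∈ V)

include hx hD hs in
lemma pow_mem {q : Polynomial ℂ} (hq : q ∈ V) {m : ℕ} (hc : q.coeff m ≠ 0) :
    (X : Polynomial ℂ) ^ m ∈ V := by
  set qp : Polynomial ℂ := (1/2 : ℂ) • (q + ((-1 : ℂ) ^ m) • q.comp (-X)) with hqpdef
  have hqpV : qp ∈ V := Submodule.smul_mem V _
    (Submodule.add_mem V hq (Submodule.smul_mem V _ (hs _ hq)))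
  have hco : ∀ j, qp.coeff j = (1/2 : ℂ) * (1 + (-1) ^ (m + j)) * q.coeff j := by
    intro j
    rw [hqpdef, coeff_smul, coeff_add, coeff_smul, coeff_comp_neg_X,
      smul_eq_mul, smul_eq_mul, pow_add]
    ring
  have hpar : ∀ j ∈ qp.support, j % 2 = m % 2 := by
    intro j hj
    rw [Polynomial.mem_support_iff, hco] at hj
    by_contra hne
    have hodd : Odd (m + j) := by rw [Nat.odd_iff]; omega
    rw [hodd.neg_one_pow] at hj
    simp at hj
  have hcm : qp.coeff m ≠ 0 := by
    rw [hco]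
    have : (-1 : ℂ) ^ (m + m) = 1 := (Even.neg_one_pow ⟨m, by ring⟩)
    rw [this]
    simpa using hc
  have hmem : m ∈ qp.support := Polynomial.mem_support_iff.mpr hcm
  have := extract k V hx hD qp.support.card qp le_rfl hqpV
    (fun i hi j hj => (hpar i hi).trans (hpar j hj).symm) m hmem
  have h2 := Submodule.smul_mem V (qp.coeff m)⁻¹ this
  rwa [smul_smul, inv_mul_cancel₀ hcm, one_smul] at h2

variable (hk : k = -(1/2) - (n : ℂ))

include hD hk in
lemma step_down {m : ℕ} (h : (X : Polynomial ℂ) ^ (m + 1) ∈ V) (hm : m ≠ 2 * n) :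
    (X : Polynomial ℂ) ^ m ∈ V := by
  have h1 := hD _ h
  rw [dunklP_X_pow] at h1
  have h2 := Submodule.smul_mem V (cE k m)⁻¹ h1
  rwa [smul_smul, inv_mul_cancel₀ (cE_ne_zero n k hk hm), one_smul] at h2

include hD hk in
lemma down_to_one : ∀ m, m ≤ 2 * n → (X : Polynomial ℂ) ^ m ∈ V → (1 : Polynomial ℂ) ∈ V := by
  intro m
  induction m with
  | zero => intro _ h; rwa [pow_zero] at h
  | succ m ih =>
    intro hle h
    exact ih (by omega) (step_down n k V hD hk h (by omega))

include hD hk in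
lemma down_to_sing : ∀ d m, m = 2 * n + 1 + d → (X : Polynomial ℂ) ^ m ∈ V →
    (X : Polynomial ℂ) ^ (2 * n + 1) ∈ V := by
  intro d
  induction d with
  | zero => intro m hm h; rwa [hm, add_zero] at h
  | succ d ih =>
    intro m hm h
    subst hm
    have h' : (X : Polynomial ℂ) ^ (2 * n + 1 + d + 1) ∈ V := by
      rw [show 2 * n + 1 + d + 1 = 2 * n + 1 + (d + 1) by ring]; exact h
    exact ih _ rfl (step_down n k V hD hk h' (by omega))

end V

end Stmt12Aux

open Stmt12Aux in
theorem stmt12 (n : ℕ) (k : ℂ) (hk : k = -(1/2) - (n : ℂ))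
    (V : Submodule ℂ (Polynomial ℂ))
    (hx : ∀ p ∈ V, X * p ∈ V)
    (hs : ∀ p ∈ V, p.comp (-X) ∈ V)
    (hD : ∀ p ∈ V, dunklP k p ∈ V)
    (hbot : V ≠ ⊥) (htop : V ≠ ⊤) :
    ∀ p : Polynomial ℂ, p ∈ V ↔ (X : Polynomial ℂ) ^ (2 * n + 1) ∣ p := by
  -- If 1 ∈ V then V = ⊤
  have htopmem : (1 : Polynomial ℂ) ∈ V → ∀ p : Polynomial ℂ, p ∈ V := by
    intro h1 p
    induction p using Polynomial.induction_on with
    | C a =>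
      have := Submodule.smul_mem V a h1
      rwa [Polynomial.smul_eq_C_mul, mul_one] at this
    | add p q hp hq => exact Submodule.add_mem V hp hq
    | monomial e a he =>
      have := hx _ he
      rwa [show X * (C a * X ^ e) = C a * X ^ (e + 1) by ring] at this
  -- no coefficient below 2n+1 for members of V
  have hlow : ∀ p ∈ V, ∀ m, m ≤ 2 * n → p.coeff m = 0 := by
    intro p hp m hm
    by_contra hc
    have hXm : (X : Polynomial ℂ) ^ m ∈ V := pow_mem k V hx hD hs hp hc
    have h1 : (1 : Polynomial ℂ) ∈ V := down_to_one n k V hD hk m hm hXm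
    exact htop (Submodule.eq_top_iff'.mpr (htopmem h1))
  -- X^(2n+1) ∈ V
  have hsing : (X : Polynomial ℂ) ^ (2 * n + 1) ∈ V := by
    obtain ⟨q, hqV, hq0⟩ := Submodule.exists_mem_ne_zero_of_ne_bot hbot
    have hcn : q.coeff q.natDegree ≠ 0 := by
      rw [← Polynomial.leadingCoeff]
      exact Polynomial.leadingCoeff_ne_zero.mpr hq0
    have hdeg : 2 * n + 1 ≤ q.natDegree := by
      by_contra hlt
      exact hcn (hlow q hqV q.natDegree (by omega))
    have hXm : (X : Polynomial ℂ) ^ q.natDegree ∈ V := pow_mem k V hx hD hs hqV hcn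
    exact down_to_sing n k V hD hk (q.natDegree - (2 * n + 1)) q.natDegree (by omega) hXm
  -- ideal ⊆ V
  have hideal : ∀ r : Polynomial ℂ, (X : Polynomial ℂ) ^ (2 * n + 1) * r ∈ V := by
    intro r
    induction r using Polynomial.induction_on with
    | C a =>
      have := Submodule.smul_mem V a hsing
      rw [Polynomial.smul_eq_C_mul] at this
      rwa [mul_comm]
    | add p q hp hq =>
      rw [mul_add]
      exact Submodule.add_mem V hp hq
    | monomial e a he =>
      have := hx _ he
      rwa [show X * ((X : Polynomial ℂ) ^ (2 * n + 1) * (C a * X ^ e)) =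
        (X : Polynomial ℂ) ^ (2 * n + 1) * (C a * X ^ (e + 1)) by ring] at this
  intro p
  constructor
  · intro hp
    rw [Polynomial.X_pow_dvd_iff]
    intro d hd
    exact hlow p hp d (by omega)
  · rintro ⟨r, rfl⟩
    exact hideal r
end
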